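/- Let τ = (1+√5)/2 and s = √(τ+2). Let A be the real 3×3 matrix [[τ/s, −1/s, 0], [1/s, τ/s, 0], [0, 0, 1]] and let B be the rotation matrix [[1, 0, 0], [0, cos(2π/5), −sin(2π/5)], [0, sin(2π/5), cos(2π/5)]]. Then A·B·A⁻¹ = (1/2)·[[τ, τ−1, 1], [τ−1, 1, −τ], [−1, τ, τ−1]]. -/

import Mathlib

/-!
Since `cos (π / 5) = τ / 2`, the double-angle formulas give `cos (2π/5) = (τ - 1) / 2` and
`sin (2π/5) = s / 2`. The matrix `A` is orthogonal because `τ² + 1 = s²`, so `A⁻¹ = Aᵀ`, and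
`A B Aᵀ` is then an entrywise computation modulo `τ² = τ + 1` and `s² = τ + 2`.
-/

/-- The golden ratio `τ = (1 + √5)/2`. -/
noncomputable def τ : ℝ := (1 + Real.sqrt 5) / 2

/-- `s = √(τ + 2)`. -/
noncomputable def s : ℝ := Real.sqrt (τ + 2)

/-- The change-of-basis matrix `A = [[τ/s, −1/s, 0], [1/s, τ/s, 0], [0, 0, 1]]`. -/
noncomputable def A : Matrix (Fin 3) (Fin 3) ℝ :=
  !![τ / s, -1 / s, 0; 1 / s, τ / s, 0; 0, 0, 1]

/-- The rotation by `2π/5` about the `x₀`-axis: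
`B = [[1, 0, 0], [0, cos(2π/5), −sin(2π/5)], [0, sin(2π/5), cos(2π/5)]]`. -/
noncomputable def B : Matrix (Fin 3) (Fin 3) ℝ :=
  !![1, 0, 0;
     0, Real.cos (2 * Real.pi / 5), -Real.sin (2 * Real.pi / 5);
     0, Real.sin (2 * Real.pi / 5), Real.cos (2 * Real.pi / 5)]

open Real Matrix

theorem Real.cos_two_pi_div_five : cos (2 * π / 5) = (goldenRatio - 1) / 2 := by
  rw [show 2 * π / 5 = 2 * (π / 5) by ring, cos_two_mul, cos_pi_div_five, goldenRatio]
  linear_combination (1 / 8 : ℝ) * sq_sqrt (show (0 : ℝ) ≤ 5 by norm_num)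

theorem Real.sin_two_pi_div_five : sin (2 * π / 5) = √(goldenRatio + 2) / 2 := by
  have hsin : 0 ≤ sin (2 * π / 5) :=
    sin_nonneg_of_nonneg_of_le_pi (by positivity) (by linarith [pi_pos])
  rw [eq_div_iff two_ne_zero, eq_comm,
    sqrt_eq_iff_eq_sq (by linarith [goldenRatio_pos]) (by linarith)]
  have hpyth := sin_sq_add_cos_sq (2 * π / 5)
  rw [cos_two_pi_div_five] at hpyth
  linear_combination -4 * hpyth + goldenRatio_sq

theorem τ_eq_goldenRatio : τ = goldenRatio := rfl

theorem τ_sq : τ ^ 2 = τ + 1 := goldenRatio_sq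

theorem τ_add_two_pos : 0 < τ + 2 := by
  rw [τ_eq_goldenRatio]; linarith [goldenRatio_pos]

theorem s_sq : s ^ 2 = τ + 2 := sq_sqrt τ_add_two_pos.le

theorem s_ne_zero : s ≠ 0 := (sqrt_pos.2 τ_add_two_pos).ne'

theorem B_eq : B = !![1, 0, 0; 0, (τ - 1) / 2, -(s / 2); 0, s / 2, (τ - 1) / 2] := by
  rw [B, cos_two_pi_div_five, sin_two_pi_div_five]; rfl

theorem A_inv : A⁻¹ = !![τ / s, 1 / s, 0; -1 / s, τ / s, 0; 0, 0, 1] := by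
  refine inv_eq_left_inv ?_
  rw [A, mul_fin_three, one_fin_three]
  simp only [EmbeddingLike.apply_eq_iff_eq, vecCons_inj, and_true]
  have := s_ne_zero
  refine ⟨⟨?_, ?_, ?_⟩, ⟨?_, ?_, ?_⟩, ⟨?_, ?_, ?_⟩⟩ <;> field_simp <;> grind [s_sq, τ_sq]

/-- the matrix computation of Section 3 of the paper:
`A·B·A⁻¹ = (1/2)·[[τ, τ−1, 1], [τ−1, 1, −τ], [−1, τ, τ−1]]`. -/
theorem conjugate_rotation_eq_M :
    A * B * A⁻¹ = (1 / 2 : ℝ) • !![τ, τ - 1, 1; τ - 1, 1, -τ; -1, τ, τ - 1] := by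
  rw [A_inv, B_eq, A, mul_fin_three, mul_fin_three, smul_of]
  simp only [EmbeddingLike.apply_eq_iff_eq, vecCons_inj, and_true, smul_cons, smul_empty,
    smul_eq_mul]
  have := s_ne_zero
  refine ⟨⟨?_, ?_, ?_⟩, ⟨?_, ?_, ?_⟩, ⟨?_, ?_, ?_⟩⟩ <;> field_simp <;> grind [s_sq, τ_sq]
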